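/- Let ρ and σ be positive semidefinite complex matrices of the same finite size and let P be an orthogonal projection (P² = P = P†) with Pσ = σP. Set P̄ = I−P and U = 2P−I (a unitary). Then PρP + P̄ρP̄ = ½(ρ + UρU†) and D(½(ρ + UρU†)‖σ) = D(PρP‖PσP) + D(P̄ρP̄‖P̄σP̄), with equality in [0,+∞]. -/

import Mathlib

open scoped ENNReal ComplexOrder Matrix

/-- `Log X`: functional calculus of the real logarithm (with `log 0 = 0`)
applied to a Hermitian (in particular, positive semidefinite) matrix `X`;
defined as `0` on non-Hermitian matrices. -/
noncomputable def matLog {n : Type*} [Fintype n] [DecidableEq n]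
    (X : Matrix n n ℂ) : Matrix n n ℂ :=
  if hX : X.IsHermitian then hX.cfc Real.log else 0

/-- Lindblad's extended quantum relative entropy `D(ρ‖σ)`, with values in `[0,+∞]`:
`D(ρ‖σ) = Tr(ρ·Log ρ) − Tr(ρ·Log σ) + Tr σ − Tr ρ` if `ran ρ ⊆ ran σ`, and `+∞` otherwise. -/
noncomputable def relEnt {n : Type*} [Fintype n] [DecidableEq n]
    (ρ σ : Matrix n n ℂ) : ℝ≥0∞ :=
  open Classical in
  if LinearMap.range ρ.mulVecLin ≤ LinearMap.range σ.mulVecLin then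
    ENNReal.ofReal ((ρ * matLog ρ).trace.re - (ρ * matLog σ).trace.re
      + σ.trace.re - ρ.trace.re)
  else ∞

/-! Both sides are computed blockwise. Since `P` commutes with `σ`, we have `σ = PσP + P̄σP̄`,
and the four blocks `PρP, P̄ρP̄, PσP, P̄σP̄` multiply to zero across the splitting. For such
orthogonal Hermitian matrices `Log (A + B) = Log A + Log B` (interpolate `log` by a polynomial
vanishing at `0`), so the trace expression of `D` splits into the two block expressions. The
range condition splits in the same way. The passage through `ENNReal.ofReal` is justified by
Klein's inequality `Tr(ρ Log ρ − ρ Log σ + σ − ρ) ≥ 0`: in the eigenbases `(uᵢ)` of `ρ` and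
`(vⱼ)` of `σ` it is an average, with weights `|⟨uᵢ, vⱼ⟩|²`, of the scalar inequalities
`a log a − a log b + b − a ≥ 0`. -/

open Matrix Polynomial

theorem Real.mul_log_sub_mul_log_add_sub_nonneg {a b : ℝ} (ha : 0 ≤ a) (hb : 0 < b) :
    0 ≤ a * Real.log a - a * Real.log b + b - a := by
  rcases ha.eq_or_lt with rfl | ha
  · simpa using hb.le
  have h := mul_le_mul_of_nonneg_left (Real.log_le_sub_one_of_pos (div_pos hb ha)) ha.le
  rw [Real.log_div hb.ne' ha.ne', mul_sub, mul_sub, mul_div_cancel₀ _ ha.ne'] at h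
  linarith

theorem add_pow_succ_of_mul_eq_zero {R : Type*} [Semiring R] {a b : R} (hab : a * b = 0)
    (hba : b * a = 0) (k : ℕ) : (a + b) ^ (k + 1) = a ^ (k + 1) + b ^ (k + 1) := by
  induction k with
  | zero => simp
  | succ k ih =>
    rw [pow_succ _ (k + 1), ih, add_mul, mul_add, mul_add, pow_succ a k, pow_succ b k,
      mul_assoc _ a b, mul_assoc _ b a, hab, hba, mul_zero, mul_zero, add_zero, zero_add,
      ← pow_succ, ← pow_succ, ← pow_succ, ← pow_succ]

theorem Polynomial.aeval_add_of_mul_eq_zero {R A : Type*} [CommSemiring R] [Semiring A]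
    [Algebra R A] {a b : A} (hab : a * b = 0) (hba : b * a = 0) {p : R[X]} (hp : p.coeff 0 = 0) :
    aeval (a + b) p = aeval a p + aeval b p := by
  simp only [aeval_eq_sum_range, ← Finset.sum_add_distrib]
  refine Finset.sum_congr rfl fun i _ => ?_
  cases i with
  | zero => simp [hp]
  | succ k => rw [add_pow_succ_of_mul_eq_zero hab hba, smul_add]

theorem IsIdempotentElem.mul_mul_self_of_commute {M : Type*} [Semigroup M] {p a : M}
    (hp : IsIdempotentElem p) (h : Commute p a) : p * a * p = a * p := by
  rw [h.eq, hp.mul_mul_self]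

theorem mul_mul_mul_mul_eq_zero {M : Type*} [SemigroupWithZero M] {p q : M} (h : p * q = 0)
    (a b : M) : p * a * p * (q * b * q) = 0 := by
  simp only [mul_assoc]
  rw [← mul_assoc p q, h, zero_mul, mul_zero, mul_zero]

section Pinching

variable {R : Type*} [Ring R]

def pinching (p a : R) : R :=
  p * a * p + (1 - p) * a * (1 - p)

theorem pinching_one_sub (p a : R) : pinching (1 - p) a = pinching p a := by
  rw [pinching, pinching, sub_sub_cancel, add_comm]

theorem IsIdempotentElem.mul_pinching {p : R} (hp : IsIdempotentElem p) (a : R) :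
    p * pinching p a = p * a * p := by
  simp only [pinching, mul_add, ← mul_assoc, hp.eq, hp.mul_one_sub_self, zero_mul, add_zero]

theorem IsIdempotentElem.pinching_eq_self_of_commute {p a : R} (hp : IsIdempotentElem p)
    (h : Commute p a) : pinching p a = a := by
  rw [pinching, hp.mul_mul_self_of_commute h,
    hp.one_sub.mul_mul_self_of_commute ((Commute.one_left a).sub_left h), ← mul_add,
    add_sub_cancel, mul_one]

end Pinching

namespace Matrix

variable {n : Type*} [Fintype n]

section Range

variable {R : Type*} [CommRing R]

theorem range_mulVecLin_mul_le {l m : Type*} [Fintype m] (A : Matrix l m R) (B : Matrix m n R) :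
    LinearMap.range (A * B).mulVecLin ≤ LinearMap.range A.mulVecLin := by
  rw [mulVecLin_mul]
  exact LinearMap.range_comp_le_range _ _

theorem range_mulVecLin_mul_mono {l m k : Type*} [Fintype m] [Fintype k] (P : Matrix l m R)
    {A : Matrix m n R} {B : Matrix m k R}
    (h : LinearMap.range A.mulVecLin ≤ LinearMap.range B.mulVecLin) :
    LinearMap.range (P * A).mulVecLin ≤ LinearMap.range (P * B).mulVecLin := by
  rw [mulVecLin_mul, mulVecLin_mul, LinearMap.range_comp, LinearMap.range_comp]
  exact Submodule.map_mono h

theorem range_mulVecLin_add_le {m : Type*} (A B : Matrix m n R) :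
    LinearMap.range (A + B).mulVecLin
      ≤ LinearMap.range A.mulVecLin ⊔ LinearMap.range B.mulVecLin := by
  rw [mulVecLin_add]
  exact LinearMap.range_add_le _ _

theorem range_pinching_le_iff [DecidableEq n] {P σ : Matrix n n R} (hP : IsIdempotentElem P)
    (hPσ : Commute P σ) (ρ : Matrix n n R) :
    LinearMap.range (pinching P ρ).mulVecLin ≤ LinearMap.range σ.mulVecLin ↔
      LinearMap.range (P * ρ * P).mulVecLin ≤ LinearMap.range (P * σ * P).mulVecLin ∧
      LinearMap.range ((1 - P) * ρ * (1 - P)).mulVecLin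
        ≤ LinearMap.range ((1 - P) * σ * (1 - P)).mulVecLin := by
  have hQσ : Commute (1 - P) σ := (Commute.one_left σ).sub_left hPσ
  constructor
  · intro h
    refine ⟨?_, ?_⟩
    · rw [hP.mul_mul_self_of_commute hPσ, ← hPσ.eq, ← hP.mul_pinching]
      exact range_mulVecLin_mul_mono P h
    · rw [hP.one_sub.mul_mul_self_of_commute hQσ, ← hQσ.eq, ← hP.one_sub.mul_pinching,
        pinching_one_sub]
      exact range_mulVecLin_mul_mono (1 - P) h
  · rintro ⟨h₁, h₂⟩
    refine (range_mulVecLin_add_le _ _).trans (sup_le (h₁.trans ?_) (h₂.trans ?_))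
    · rw [hP.mul_mul_self_of_commute hPσ]
      exact range_mulVecLin_mul_le σ P
    · rw [hP.one_sub.mul_mul_self_of_commute hQσ]
      exact range_mulVecLin_mul_le σ (1 - P)

end Range

theorem mulVec_eq_zero_of_range_le {𝕜 : Type*} [RCLike 𝕜] {M S : Matrix n n 𝕜}
    (hM : M.PosSemidef) (hS : S.IsHermitian)
    (h : LinearMap.range M.mulVecLin ≤ LinearMap.range S.mulVecLin) {v : n → 𝕜}
    (hv : S *ᵥ v = 0) : M *ᵥ v = 0 := by
  obtain ⟨w, hw⟩ := h (LinearMap.mem_range_self M.mulVecLin v)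
  rw [← hM.dotProduct_mulVec_zero_iff, ← mulVecLin_apply, ← hw, mulVecLin_apply,
    dotProduct_mulVec, ← hS.eq, ← star_mulVec, hv, star_zero, zero_dotProduct]

theorem PosSemidef.mul_mul_of_isHermitian {𝕜 : Type*} [RCLike 𝕜] {X R : Matrix n n 𝕜}
    (hX : X.PosSemidef) (hR : R.IsHermitian) : (R * X * R).PosSemidef := by
  simpa only [hR.eq] using hX.mul_mul_conjTranspose_same R

variable [DecidableEq n]

theorem pinching_eq_half_add_conj {P : Matrix n n ℂ} (hP : Pᴴ = P) (ρ : Matrix n n ℂ) :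
    pinching P ρ = (2⁻¹ : ℂ) • (ρ + (2 • P - 1) * ρ * (2 • P - 1)ᴴ) := by
  have hU : (2 • P - 1 : Matrix n n ℂ)ᴴ = 2 • P - 1 := by
    rw [two_smul, conjTranspose_sub, conjTranspose_add, hP, conjTranspose_one]
  have h2 : ρ + (2 • P - 1) * ρ * (2 • P - 1)ᴴ = (2 : ℂ) • pinching P ρ := by
    rw [hU, pinching, two_smul, two_smul]
    noncomm_ring
  rw [h2, smul_smul, inv_mul_cancel₀ two_ne_zero, one_smul]

section FunctionalCalculus

variable {𝕜 : Type*} [RCLike 𝕜]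

theorem cfc_add_of_mul_eq_zero {M N : Matrix n n 𝕜} (hM : M.IsHermitian) (hN : N.IsHermitian)
    (hMN : M * N = 0) {f : ℝ → ℝ} (hf : f 0 = 0) : cfc f (M + N) = cfc f M + cfc f N := by
  have hNM : N * M = 0 := by simpa [hM.eq, hN.eq] using congrArg conjTranspose hMN
  set s : Set ℝ := spectrum ℝ M ∪ spectrum ℝ N ∪ spectrum ℝ (M + N) ∪ {0}
  have hs : s.Finite :=
    ((finite_real_spectrum.union finite_real_spectrum).union finite_real_spectrum).union
      (Set.finite_singleton 0)
  -- a polynomial that agrees with `f` on all three spectra and vanishes at `0`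
  set p := Lagrange.interpolate hs.toFinset id f
  have hp : ∀ x ∈ s, p.eval x = f x := fun x hx =>
    Lagrange.eval_interpolate_at_node f (Set.injOn_id _) (hs.mem_toFinset.mpr hx)
  have hcfc : ∀ X : Matrix n n 𝕜, X.IsHermitian → spectrum ℝ X ⊆ s → cfc f X = aeval X p :=
    fun X hX hXs => by
      rw [← cfc_polynomial p X hX]
      exact cfc_congr fun x hx => (hp x (hXs hx)).symm
  rw [hcfc M hM (by intro x; simp +contextual [s]), hcfc N hN (by intro x; simp +contextual [s]),
    hcfc _ (hM.add hN) (by intro x; simp +contextual [s]),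
    aeval_add_of_mul_eq_zero hMN hNM (by rw [coeff_zero_eq_eval_zero, hp 0 (by simp [s]), hf])]

theorem cfc_log_eq_self_mul_cfc {A : Matrix n n 𝕜} (hA : A.IsHermitian) :
    cfc Real.log A = A * cfc (fun x => Real.log x / x) A := by
  calc cfc Real.log A = cfc (fun x => x * (Real.log x / x)) A :=
        cfc_congr fun x _ => by
          rcases eq_or_ne x 0 with rfl | hx
          · simp
          · rw [mul_div_cancel₀ _ hx]
    _ = _ := by rw [cfc_mul _ _ A (continuousOn_id' _) (finite_real_spectrum.continuousOn _),
        cfc_id' ℝ A]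

end FunctionalCalculus

theorem matLog_of_isHermitian {A : Matrix n n ℂ} (hA : A.IsHermitian) :
    matLog A = cfc Real.log A := by
  rw [matLog, dif_pos hA, hA.cfc_eq]

theorem mul_matLog_eq_zero {M X : Matrix n n ℂ} (h : X * M = 0) : X * matLog M = 0 := by
  by_cases hM : M.IsHermitian
  · rw [matLog_of_isHermitian hM, cfc_log_eq_self_mul_cfc hM, ← mul_assoc, h, zero_mul]
  · rw [matLog, dif_neg hM, mul_zero]

theorem matLog_add_of_mul_eq_zero {M N : Matrix n n ℂ} (hM : M.IsHermitian)
    (hN : N.IsHermitian) (h : M * N = 0) : matLog (M + N) = matLog M + matLog N := by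
  rw [matLog_of_isHermitian hM, matLog_of_isHermitian hN, matLog_of_isHermitian (hM.add hN),
    cfc_add_of_mul_eq_zero hM hN h Real.log_zero]

noncomputable def eigenOverlap {A B : Matrix n n ℂ} (hA : A.IsHermitian) (hB : B.IsHermitian)
    (i j : n) : ℝ :=
  Complex.normSq ((star (hA.eigenvectorUnitary : Matrix n n ℂ) * hB.eigenvectorUnitary) i j)

theorem trace_cfc_mul_cfc {A B : Matrix n n ℂ} (hA : A.IsHermitian) (hB : B.IsHermitian)
    (f g : ℝ → ℝ) :
    (cfc f A * cfc g B).trace = ((∑ i, ∑ j,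
      f (hA.eigenvalues i) * g (hB.eigenvalues j) * eigenOverlap hA hB i j : ℝ) : ℂ) := by
  rw [hA.cfc_eq, hB.cfc_eq, IsHermitian.cfc, IsHermitian.cfc, Unitary.conjStarAlgAut_apply,
    Unitary.conjStarAlgAut_apply]
  set U : Matrix n n ℂ := ↑hA.eigenvectorUnitary
  set V : Matrix n n ℂ := ↑hB.eigenvectorUnitary
  set W := star U * V
  have hW : star V * U = Wᴴ := by simp [W, star_eq_conjTranspose, conjTranspose_mul]
  calc _ = (U * (diagonal (RCLike.ofReal ∘ f ∘ hA.eigenvalues) * W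
        * diagonal (RCLike.ofReal ∘ g ∘ hB.eigenvalues) * star V)).trace := by
        simp only [W, mul_assoc]
    _ = (diagonal (RCLike.ofReal ∘ f ∘ hA.eigenvalues) * W
        * diagonal (RCLike.ofReal ∘ g ∘ hB.eigenvalues) * Wᴴ).trace := by
        rw [trace_mul_comm, ← hW]
        simp only [mul_assoc]
    _ = _ := by
      push_cast
      refine Finset.sum_congr rfl fun i _ => ?_
      rw [diag_apply, mul_apply]
      refine Finset.sum_congr rfl fun j _ => ?_
      rw [mul_diagonal, diagonal_mul, conjTranspose_apply, eigenOverlap, ← Complex.mul_conj]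
      simp only [Function.comp_apply, Complex.star_def, RCLike.ofReal_eq_complex_ofReal]
      ring

noncomputable def relEntReal (ρ σ : Matrix n n ℂ) : ℝ :=
  (ρ * matLog ρ).trace.re - (ρ * matLog σ).trace.re + σ.trace.re - ρ.trace.re

theorem relEnt_of_range_le {ρ σ : Matrix n n ℂ}
    (h : LinearMap.range ρ.mulVecLin ≤ LinearMap.range σ.mulVecLin) :
    relEnt ρ σ = ENNReal.ofReal (relEntReal ρ σ) := by
  rw [relEnt, if_pos h, relEntReal]

theorem relEnt_of_not_range_le {ρ σ : Matrix n n ℂ}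
    (h : ¬ LinearMap.range ρ.mulVecLin ≤ LinearMap.range σ.mulVecLin) : relEnt ρ σ = ∞ := by
  rw [relEnt, if_neg h]

theorem relEntReal_eq_sum {M S : Matrix n n ℂ} (hM : M.IsHermitian) (hS : S.IsHermitian) :
    relEntReal M S = ∑ i, ∑ j, eigenOverlap hM hS i j *
      (hM.eigenvalues i * Real.log (hM.eigenvalues i)
        - hM.eigenvalues i * Real.log (hS.eigenvalues j) + hS.eigenvalues j
        - hM.eigenvalues i) := by
  have hcont : ∀ (X : Matrix n n ℂ) (f : ℝ → ℝ), ContinuousOn f (spectrum ℝ X) :=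
    fun _ f => finite_real_spectrum.continuousOn f
  have h₁ : M * matLog M = cfc (fun x => x * Real.log x) M * cfc (fun _ : ℝ => (1 : ℝ)) S := by
    rw [cfc_const_one ℝ S, mul_one, cfc_mul _ _ M (hcont M _) (hcont M _), cfc_id' ℝ M,
      matLog_of_isHermitian hM]
  have h₂ : M * matLog S = cfc (fun x : ℝ => x) M * cfc Real.log S := by
    rw [cfc_id' ℝ M, matLog_of_isHermitian hS]
  have h₃ : S.trace = (cfc (fun _ : ℝ => (1 : ℝ)) M * cfc (fun x : ℝ => x) S).trace := by
    rw [cfc_const_one ℝ M, one_mul, cfc_id' ℝ S]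
  have h₄ : M.trace = (cfc (fun x : ℝ => x) M * cfc (fun _ : ℝ => (1 : ℝ)) S).trace := by
    rw [cfc_const_one ℝ S, mul_one, cfc_id' ℝ M]
  rw [relEntReal, h₁, h₂, h₃, h₄]
  simp only [trace_cfc_mul_cfc hM hS, Complex.ofReal_re, ← Finset.sum_sub_distrib,
    ← Finset.sum_add_distrib]
  refine Finset.sum_congr rfl fun i _ => Finset.sum_congr rfl fun j _ => ?_
  ring

theorem eigenOverlap_eq_zero {M S : Matrix n n ℂ} (hM : M.IsHermitian) (hS : S.IsHermitian)
    (hker : ∀ v, S *ᵥ v = 0 → M *ᵥ v = 0) {i j : n} (ha : hM.eigenvalues i ≠ 0)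
    (hb : hS.eigenvalues j = 0) : eigenOverlap hM hS i j = 0 := by
  set U : Matrix n n ℂ := ↑hM.eigenvectorUnitary
  set V : Matrix n n ℂ := ↑hS.eigenvectorUnitary
  set v := ⇑(hS.eigenvectorBasis j)
  have hMv : M *ᵥ v = 0 := hker v (by rw [hS.mulVec_eigenvectorBasis, hb, zero_smul])
  have hdiag : diagonal (RCLike.ofReal ∘ hM.eigenvalues) * star U = star U * M := by
    rw [← hM.conjStarAlgAut_star_eigenvectorUnitary, Unitary.conjStarAlgAut_apply]
    simp [U, mul_assoc]
  have h : (hM.eigenvalues i : ℂ) * (star U * V) i j = 0 :=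
    calc _ = (diagonal (RCLike.ofReal ∘ hM.eigenvalues) * star U * V : Matrix n n ℂ) i j := by
          rw [mul_assoc, diagonal_mul]; rfl
      _ = (star U *ᵥ (M *ᵥ v)) i := by rw [hdiag, mulVec_mulVec]; rfl
      _ = 0 := by rw [hMv, mulVec_zero, Pi.zero_apply]
  rw [eigenOverlap, Complex.normSq_eq_zero]
  exact (mul_eq_zero.mp h).resolve_left (Complex.ofReal_ne_zero.mpr ha)

/-- **Klein's inequality** -/
theorem relEntReal_nonneg {M S : Matrix n n ℂ} (hM : M.PosSemidef) (hS : S.PosSemidef)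
    (h : LinearMap.range M.mulVecLin ≤ LinearMap.range S.mulVecLin) : 0 ≤ relEntReal M S := by
  rw [relEntReal_eq_sum hM.1 hS.1]
  refine Finset.sum_nonneg fun i _ => Finset.sum_nonneg fun j _ => ?_
  rcases (hS.eigenvalues_nonneg j).eq_or_lt with hb | hb
  · rcases eq_or_ne (hM.1.eigenvalues i) 0 with ha | ha
    · simp [ha, ← hb]
    · rw [eigenOverlap_eq_zero hM.1 hS.1
        (fun _ => mulVec_eq_zero_of_range_le hM hS.1 h) ha hb.symm, zero_mul]
  · exact mul_nonneg (Complex.normSq_nonneg _)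
      (Real.mul_log_sub_mul_log_add_sub_nonneg (hM.eigenvalues_nonneg i) hb)

theorem relEntReal_add {A B S T : Matrix n n ℂ} (hA : A.IsHermitian) (hB : B.IsHermitian)
    (hS : S.IsHermitian) (hT : T.IsHermitian) (hAB : A * B = 0) (hST : S * T = 0)
    (hAT : A * T = 0) (hBS : B * S = 0) :
    relEntReal (A + B) (S + T) = relEntReal A S + relEntReal B T := by
  have hBA : B * A = 0 := by simpa [hA.eq, hB.eq] using congrArg conjTranspose hAB
  simp only [relEntReal, matLog_add_of_mul_eq_zero hA hB hAB, matLog_add_of_mul_eq_zero hS hT hST,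
    add_mul, mul_add, mul_matLog_eq_zero hAB, mul_matLog_eq_zero hBA, mul_matLog_eq_zero hAT,
    mul_matLog_eq_zero hBS, add_zero, zero_add, trace_add, Complex.add_re]
  ring

theorem relEnt_pinching_eq_add {ρ σ P : Matrix n n ℂ} (hρ : ρ.PosSemidef) (hσ : σ.PosSemidef)
    (hP : IsStarProjection P) (hPσ : Commute P σ) :
    relEnt (pinching P ρ) σ = relEnt (P * ρ * P) (P * σ * P)
      + relEnt ((1 - P) * ρ * (1 - P)) ((1 - P) * σ * (1 - P)) := by
  have hPh : P.IsHermitian := hP.isSelfAdjoint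
  have hQh : (1 - P).IsHermitian := hP.one_sub.isSelfAdjoint
  have hρP := hρ.mul_mul_of_isHermitian hPh
  have hρQ := hρ.mul_mul_of_isHermitian hQh
  have hσP := hσ.mul_mul_of_isHermitian hPh
  have hσQ := hσ.mul_mul_of_isHermitian hQh
  have hPQ : P * (1 - P) = 0 := hP.mul_one_sub_self
  have hQP : (1 - P) * P = 0 := hP.one_sub_mul_self
  by_cases h : LinearMap.range (pinching P ρ).mulVecLin ≤ LinearMap.range σ.mulVecLin
  · obtain ⟨h₁, h₂⟩ := (range_pinching_le_iff hP.isIdempotentElem hPσ ρ).mp h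
    rw [relEnt_of_range_le h, relEnt_of_range_le h₁, relEnt_of_range_le h₂,
      ← ENNReal.ofReal_add (relEntReal_nonneg hρP hσP h₁) (relEntReal_nonneg hρQ hσQ h₂)]
    congr 1
    calc relEntReal (pinching P ρ) σ = relEntReal (pinching P ρ) (pinching P σ) := by
          rw [hP.isIdempotentElem.pinching_eq_self_of_commute hPσ]
      _ = _ := relEntReal_add hρP.1 hρQ.1 hσP.1 hσQ.1 (mul_mul_mul_mul_eq_zero hPQ ρ ρ)
          (mul_mul_mul_mul_eq_zero hPQ σ σ) (mul_mul_mul_mul_eq_zero hPQ ρ σ)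
          (mul_mul_mul_mul_eq_zero hQP ρ σ)
  · rw [relEnt_of_not_range_le h]
    rcases not_and_or.mp (mt (range_pinching_le_iff hP.isIdempotentElem hPσ ρ).mpr h)
      with h | h <;> simp [relEnt_of_not_range_le h]

end Matrix

open Matrix in
/-- For an orthogonal projection `P` commuting with `σ`, with `P̄ = I − P` and
`U = 2P − I`: `PρP + P̄ρP̄ = ½(ρ + UρU†)` and
`D(½(ρ + UρU†)‖σ) = D(PρP‖PσP) + D(P̄ρP̄‖P̄σP̄)` in `[0,+∞]`. -/
theorem relEnt_pinching {n : Type*} [Fintype n] [DecidableEq n]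
    (ρ σ P : Matrix n n ℂ) (hρ : ρ.PosSemidef) (hσ : σ.PosSemidef)
    (hP2 : P * P = P) (hPadj : Pᴴ = P) (hPσ : P * σ = σ * P) :
    P * ρ * P + (1 - P) * ρ * (1 - P)
        = (2⁻¹ : ℂ) • (ρ + (2 • P - 1) * ρ * (2 • P - 1)ᴴ) ∧
      relEnt ((2⁻¹ : ℂ) • (ρ + (2 • P - 1) * ρ * (2 • P - 1)ᴴ)) σ
        = relEnt (P * ρ * P) (P * σ * P)
          + relEnt ((1 - P) * ρ * (1 - P)) ((1 - P) * σ * (1 - P)) := by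
  have hpinch := pinching_eq_half_add_conj hPadj ρ
  refine ⟨hpinch, ?_⟩
  rw [← hpinch]
  exact relEnt_pinching_eq_add hρ hσ ⟨hP2, hPadj⟩ hPσ
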